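/- arXiv:2509.05812 — 2 statements merged into one kernel-verified Lean document; each statement's English description precedes it below -/
import Mathlib

section
/- For every integer d ≥ 1 and every vector of positive real numbers f(1), …, f(d) with f(1) + ⋯ + f(d) = 1, there exists a sequence v : ℕ → {1, …, d} such that: (1) for each i ∈ {1, …, d}, the letter i has frequency f(i) in v; (2) v is k-balanced with k = ⌈log₂ d⌉; and (3) the factor complexity of v satisfies 𝒞_v(n) ≤ (n+1)^{d−1} for all n ∈ ℕ. -/
/-!
Split the alphabet into two blocks of sizes `⌈d/2⌉` and `⌊d/2⌋` and realize the two normalized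
blocks of `f` by induction. A mechanical (Sturmian) word of slope `p`, the mass of the first block,
decides at each position whether the next letter is read from the first or the second sequence.
A mechanical word is `1`-balanced with complexity `n + 1`; interleaving along it raises the
balance constant by one, which gives `⌈log₂ d⌉`, and multiplies the complexities, because a
factor of the interleaving is determined by the factors of the three ingredients at the
corresponding positions.
-/

open Finset Filter Topology

/-- Number of occurrences of the letter `c` in the factor of `u` of length `n`
starting at position `i`, i.e. `#{t : i ≤ t < i+n, u t = c}`. -/
def cnt {A : Type*} [DecidableEq A] (u : ℕ → A) (c : A) (i n : ℕ) : ℕ :=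
  ((Finset.Ico i (i + n)).filter (fun t => u t = c)).card

/-- A sequence `u` is `k`-balanced if the numbers of occurrences of any letter in
any two factors of the same length differ by at most `k`. -/
def IsBalanced {A : Type*} [DecidableEq A] (k : ℕ) (u : ℕ → A) : Prop :=
  ∀ i j n : ℕ, ∀ c : A, ((cnt u c i n : ℤ) - (cnt u c j n : ℤ)).natAbs ≤ k

/-- The letter `c` has frequency `f` in the sequence `u`. -/
def HasFreq {A : Type*} [DecidableEq A] (u : ℕ → A) (c : A) (f : ℝ) : Prop :=
  Tendsto (fun n : ℕ => (cnt u c 0 n : ℝ) / n) atTop (𝓝 f)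

/-- The factor complexity of `u`: the number of distinct words of length `n`
occurring as factors of `u`. -/
noncomputable def complexity {A : Type*} (u : ℕ → A) (n : ℕ) : ℕ :=
  Set.ncard {w : Fin n → A | ∃ i : ℕ, ∀ t : Fin n, w t = u (i + t)}

theorem Int.floor_add_eq_add_ite {R : Type*} [CommRing R] [LinearOrder R] [IsStrictOrderedRing R]
    [FloorRing R] (a b : R) :
    ⌊a + b⌋ = ⌊a⌋ + ⌊b⌋ + if 1 ≤ Int.fract a + Int.fract b then 1 else 0 := by
  have hsplit : a + b = ↑(⌊a⌋ + ⌊b⌋) + (Int.fract a + Int.fract b) := by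
    push_cast; linarith [Int.floor_add_fract a, Int.floor_add_fract b]
  have := Int.fract_nonneg a; have := Int.fract_lt_one a
  have := Int.fract_nonneg b; have := Int.fract_lt_one b
  rw [hsplit, Int.floor_intCast_add, add_right_inj, Int.floor_eq_iff]
  split_ifs <;> push_cast <;> constructor <;> linarith

theorem Monotone.eq_of_card_eq {ι γ : Type*} [LinearOrder ι] {T : ι → Finset γ}
    (hT : Monotone T) {x y : ι} (h : #(T x) = #(T y)) : T x = T y := by
  rcases le_total x y with hxy | hxy
  · exact eq_of_subset_of_card_le (hT hxy) h.ge
  · exact (eq_of_subset_of_card_le (hT hxy) h.le).symm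

section Counting

variable {α : Type*} [DecidableEq α]

theorem cnt_zero (u : ℕ → α) (c : α) (i : ℕ) : cnt u c i 0 = 0 := by
  simp [cnt]

theorem cnt_succ (u : ℕ → α) (c : α) (i n : ℕ) :
    cnt u c i (n + 1) = cnt u c i n + if u (i + n) = c then 1 else 0 := by
  rw [cnt, ← add_assoc, Nat.Ico_succ_right_eq_insert_Ico (by omega), filter_insert]
  split_ifs with h
  · rw [card_insert_of_notMem (by simp)]; rfl
  · rfl

theorem cnt_le (u : ℕ → α) (c : α) (i n : ℕ) : cnt u c i n ≤ n :=
  (card_filter_le _ _).trans (by simp)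

theorem cnt_add (u : ℕ → α) (c : α) (i m n : ℕ) :
    cnt u c i (m + n) = cnt u c i m + cnt u c (i + m) n := by
  induction n with
  | zero => simp [cnt_zero]
  | succ n ih => rw [← add_assoc, cnt_succ, ih, cnt_succ, add_assoc i, add_assoc]

theorem cnt_congr {u : ℕ → α} {i j n : ℕ} (h : ∀ s < n, u (i + s) = u (j + s)) (c : α) :
    cnt u c i n = cnt u c j n := by
  induction n with
  | zero => simp [cnt_zero]
  | succ n ih =>
    rw [cnt_succ, cnt_succ, ih fun s hs => h s (by omega), h n (by omega)]

theorem cnt_comp_equiv {β : Type*} [DecidableEq β] (e : α ≃ β) (u : ℕ → α) (c : β) (i n : ℕ) :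
    cnt (e ∘ u) c i n = cnt u (e.symm c) i n := by
  simp only [cnt, Function.comp_apply, ← e.eq_symm_apply]

/-- Counting along a subsequence: `v` reads `z` at the positions where `u = b`, as far as the
letters `c` and `c'` are concerned. -/
theorem cnt_eq_cnt_of_subsequence {β γ : Type*} [DecidableEq β] [DecidableEq γ]
    {u : ℕ → Bool} {b : Bool} {z : ℕ → β} {c' : β} {v : ℕ → γ} {c : γ}
    (h : ∀ t, v t = c ↔ u t = b ∧ z (cnt u b 0 t) = c') (i n : ℕ) :
    cnt v c i n = cnt z c' (cnt u b 0 i) (cnt u b i n) := by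
  induction n with
  | zero => simp [cnt_zero]
  | succ n ih =>
    have hstart : cnt u b 0 i + cnt u b i n = cnt u b 0 (i + n) := by
      rw [cnt_add, zero_add]
    by_cases hb : u (i + n) = b
    · simp only [cnt_succ, ih, hb, h, if_true, true_and, hstart]
    · simp [cnt_succ, ih, hb, h]

theorem HasFreq.tendsto_cnt_div {x : ℕ → α} {c : α} {g : ℝ} (hx : HasFreq x c g) {N : ℕ → ℕ}
    {q : ℝ} (hq : 0 < q) (hN : Tendsto (fun n => (N n : ℝ) / n) atTop (𝓝 q)) :
    Tendsto (fun n => (cnt x c 0 (N n) : ℝ) / n) atTop (𝓝 (g * q)) := by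
  have hN_top : Tendsto N atTop atTop := by
    refine tendsto_natCast_atTop_iff.1
      ((hN.pos_mul_atTop hq tendsto_natCast_atTop_atTop).congr' ?_)
    filter_upwards [eventually_ne_atTop 0] with n hn
    field_simp
  refine ((hx.comp hN_top).mul hN).congr' ?_
  filter_upwards [hN_top.eventually_ne_atTop 0] with n hn
  simp only [Function.comp_apply]
  field_simp

theorem IsBalanced.natAbs_cnt_sub_le_succ {k : ℕ} {x : ℕ → α} (hx : IsBalanced k x) (c : α)
    (i j : ℕ) {m₁ m₂ : ℕ} (h₁ : m₁ ≤ m₂ + 1) (h₂ : m₂ ≤ m₁ + 1) :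
    ((cnt x c i m₁ : ℤ) - cnt x c j m₂).natAbs ≤ k + 1 := by
  rcases le_total m₁ m₂ with h | h
  · obtain ⟨r, rfl⟩ := Nat.exists_eq_add_of_le h
    have := cnt_le x c (j + m₁) r
    have := hx i j m₁ c
    rw [cnt_add]; omega
  · obtain ⟨r, rfl⟩ := Nat.exists_eq_add_of_le h
    have := cnt_le x c (i + m₂) r
    have := hx i j m₂ c
    rw [cnt_add]; omega

end Counting

section Factors

variable {α : Type*}

def factor (u : ℕ → α) (n i : ℕ) : Fin n → α := fun t => u (i + t)

theorem complexity_eq_ncard_range (u : ℕ → α) (n : ℕ) :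
    complexity u n = (Set.range (factor u n)).ncard := by
  simp only [complexity, factor, funext_iff, Set.range, eq_comm]

theorem complexity_le_ncard_range {β : Type*} {u : ℕ → α} {n : ℕ} {g : ℕ → β}
    (hg : Function.FactorsThrough (factor u n) g) (hfin : (Set.range g).Finite) :
    complexity u n ≤ (Set.range g).ncard := by
  rw [complexity_eq_ncard_range]
  have : factor u n = Function.extend g (factor u n) (fun _ => factor u n 0) ∘ g :=
    funext fun i => (hg.extend_apply _ i).symm
  rw [this, Set.range_comp]
  exact Set.ncard_image_le hfin

theorem complexity_comp_equiv {β : Type*} (e : α ≃ β) (u : ℕ → α) (n : ℕ) :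
    complexity (e ∘ u) n = complexity u n := by
  have : Set.range (factor (e ∘ u) n) = (e ∘ ·) '' Set.range (factor u n) := by
    rw [← Set.range_comp]; rfl
  rw [complexity_eq_ncard_range, complexity_eq_ncard_range, this,
    Set.ncard_image_of_injective _ e.injective.comp_left]

end Factors

section Binary

variable {u : ℕ → Bool}

theorem cnt_true_add_cnt_false (u : ℕ → Bool) (i n : ℕ) :
    cnt u true i n + cnt u false i n = n := by
  induction n with
  | zero => simp [cnt_zero]
  | succ n ih => cases h : u (i + n) <;> simp [cnt_succ, h] <;> omega

theorem isBalanced_of_cnt_true {k : ℕ}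
    (h : ∀ i j n, ((cnt u true i n : ℤ) - cnt u true j n).natAbs ≤ k) : IsBalanced k u := by
  intro i j n c
  have hi := cnt_true_add_cnt_false u i n
  have hj := cnt_true_add_cnt_false u j n
  cases c
  · have := h i j n; omega
  · exact h i j n

theorem HasFreq.false_of_true {p : ℝ} (hu : HasFreq u true p) : HasFreq u false (1 - p) := by
  refine (tendsto_const_nhds.sub hu).congr' ?_
  filter_upwards [eventually_ne_atTop 0] with n hn
  have hsum : (cnt u true 0 n : ℝ) + cnt u false 0 n = n := by
    exact_mod_cast cnt_true_add_cnt_false u 0 n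
  field_simp
  linarith

end Binary

section Mechanical

/-- The lower mechanical (Sturmian) word `⌊(n+1)p⌋ - ⌊np⌋` of slope `p`. -/
noncomputable def mechanical (p : ℝ) (n : ℕ) : Bool := decide (⌊n * p⌋ < ⌊(n + 1) * p⌋)

variable {p : ℝ}

theorem floor_succ_mul_sub_floor_mul (hp0 : 0 ≤ p) (hp1 : p ≤ 1) (m : ℕ) :
    ⌊((m : ℝ) + 1) * p⌋ - ⌊m * p⌋ = if mechanical p m then 1 else 0 := by
  have hlo : ⌊m * p⌋ ≤ ⌊((m : ℝ) + 1) * p⌋ := Int.floor_mono (by nlinarith)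
  have hhi : ⌊((m : ℝ) + 1) * p⌋ ≤ ⌊m * p⌋ + 1 := by
    rw [← Int.floor_add_one]; exact Int.floor_mono (by nlinarith)
  by_cases h : ⌊m * p⌋ < ⌊((m : ℝ) + 1) * p⌋
  · simp only [mechanical, h, decide_true, if_true]; omega
  · simp only [mechanical, h, decide_false, Bool.false_eq_true, if_false]; omega

theorem cnt_mechanical (hp0 : 0 ≤ p) (hp1 : p ≤ 1) (i n : ℕ) :
    (cnt (mechanical p) true i n : ℤ) = ⌊((i : ℝ) + n) * p⌋ - ⌊i * p⌋ := by
  induction n with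
  | zero => simp [cnt_zero]
  | succ n ih =>
    have := floor_succ_mul_sub_floor_mul hp0 hp1 (i + n)
    push_cast at this ⊢
    rw [cnt_succ, Nat.cast_add, ih, ← add_assoc]
    split_ifs at this ⊢ <;> push_cast <;> omega

theorem isBalanced_mechanical (hp0 : 0 ≤ p) (hp1 : p ≤ 1) : IsBalanced 1 (mechanical p) := by
  refine isBalanced_of_cnt_true fun i j n => ?_
  have window (i : ℕ) : ⌊(n : ℝ) * p⌋ ≤ cnt (mechanical p) true i n ∧
      (cnt (mechanical p) true i n : ℤ) ≤ ⌊(n : ℝ) * p⌋ + 1 := by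
    rw [cnt_mechanical hp0 hp1, add_mul]
    have := Int.le_floor_add ((i : ℝ) * p) (n * p)
    have := Int.le_floor_add_floor ((i : ℝ) * p) (n * p)
    omega
  have := window i
  have := window j
  omega

theorem hasFreq_mechanical (hp0 : 0 ≤ p) (hp1 : p ≤ 1) : HasFreq (mechanical p) true p := by
  have hcnt (n : ℕ) : cnt (mechanical p) true 0 n = ⌊p * n⌋₊ := by
    have := cnt_mechanical hp0 hp1 0 n
    rw [Nat.cast_zero, zero_add, zero_mul, Int.floor_zero, sub_zero, mul_comm,
      ← Int.natCast_floor_eq_floor (by positivity)] at this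
    exact_mod_cast this
  simpa only [HasFreq, hcnt, Function.comp_def] using
    (tendsto_nat_floor_mul_div_atTop hp0).comp tendsto_natCast_atTop_atTop

theorem mechanical_add (p : ℝ) (i t : ℕ) :
    mechanical p (i + t) = decide
      (⌊(t : ℝ) * p⌋ + (if 1 ≤ Int.fract (i * p) + Int.fract (t * p) then 1 else 0) <
        ⌊((t : ℝ) + 1) * p⌋ +
          if 1 ≤ Int.fract (i * p) + Int.fract (((t + 1 : ℕ) : ℝ) * p) then 1 else 0) := by
  have h₁ : ((i + t : ℕ) : ℝ) * p = i * p + t * p := by push_cast; ring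
  have h₂ : (((i + t : ℕ) : ℝ) + 1) * p = i * p + ((t + 1 : ℕ) : ℝ) * p := by push_cast; ring
  rw [mechanical, h₁, h₂, Int.floor_add_eq_add_ite, Int.floor_add_eq_add_ite, Nat.cast_succ]
  exact decide_eq_decide.2 (by omega)

/-- For `x = fract (i p)`: the `s ≤ n` with `⌊(i + s) p⌋ = ⌊i p⌋ + ⌊s p⌋ + 1`. By
`mechanical_add` they determine the factor of length `n` of `mechanical p` at `i`. -/
noncomputable def carries (p : ℝ) (n : ℕ) (x : ℝ) : Finset ℕ :=
  (range (n + 1)).filter fun s => 1 ≤ x + Int.fract (s * p)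

theorem carries_mono (p : ℝ) (n : ℕ) : Monotone (carries p n) :=
  fun _ _ hxy => monotone_filter_right _ fun _ _ h => by linarith

theorem card_carries_le (p : ℝ) (n : ℕ) {x : ℝ} (hx : x < 1) : #(carries p n x) ≤ n := by
  have hsub : carries p n x ⊆ (range (n + 1)).erase 0 := by
    intro s hs
    simp only [carries, mem_filter] at hs
    refine mem_erase.2 ⟨?_, hs.1⟩
    rintro rfl
    simp only [Nat.cast_zero, zero_mul, Int.fract_zero, add_zero] at hs
    exact hx.not_ge hs.2
  simpa using card_le_card hsub

theorem factor_mechanical_eq_of_carries_eq {p : ℝ} {n i j : ℕ}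
    (h : carries p n (Int.fract (i * p)) = carries p n (Int.fract (j * p))) :
    factor (mechanical p) n i = factor (mechanical p) n j := by
  have hcarry (s : ℕ) (hs : s ≤ n) : 1 ≤ Int.fract (i * p) + Int.fract (s * p) ↔
      1 ≤ Int.fract (j * p) + Int.fract (s * p) := by
    simpa [carries, Nat.lt_succ_iff.2 hs] using Finset.ext_iff.1 h s
  funext t
  simp only [factor, mechanical_add, hcarry t t.2.le, hcarry (t + 1) t.2]

theorem complexity_mechanical_le (p : ℝ) (n : ℕ) : complexity (mechanical p) n ≤ n + 1 := by
  let g : ℕ → ℕ := fun i => #(carries p n (Int.fract (i * p)))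
  have hdet : Function.FactorsThrough (factor (mechanical p) n) g := fun _ _ h =>
    factor_mechanical_eq_of_carries_eq ((carries_mono p n).eq_of_card_eq h)
  have hrange : Set.range g ⊆ (range (n + 1) : Set ℕ) := by
    rintro _ ⟨i, rfl⟩
    exact mem_range.2 (Nat.lt_succ_of_le (card_carries_le p n (Int.fract_lt_one _)))
  calc complexity (mechanical p) n ≤ (Set.range g).ncard :=
        complexity_le_ncard_range hdet ((range (n + 1)).finite_toSet.subset hrange)
    _ ≤ (range (n + 1) : Set ℕ).ncard := Set.ncard_le_ncard hrange
    _ = n + 1 := by simp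

end Mechanical

section Interleave

variable {α β : Type*}

def interleave (u : ℕ → Bool) (x : ℕ → α) (y : ℕ → β) (t : ℕ) : α ⊕ β :=
  if u t then .inl (x (cnt u true 0 t)) else .inr (y (cnt u false 0 t))

variable (u : ℕ → Bool) (x : ℕ → α) (y : ℕ → β)

theorem interleave_add (i t : ℕ) :
    interleave u x y (i + t) = if u (i + t) then .inl (x (cnt u true 0 i + cnt u true i t))
      else .inr (y (cnt u false 0 i + cnt u false i t)) := by
  simp only [interleave, cnt_add, zero_add]

theorem factor_interleave_eq {n i j : ℕ} (hu : factor u n i = factor u n j)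
    (hx : factor x n (cnt u true 0 i) = factor x n (cnt u true 0 j))
    (hy : factor y n (cnt u false 0 i) = factor y n (cnt u false 0 j)) :
    factor (interleave u x y) n i = factor (interleave u x y) n j := by
  have hu' (s : ℕ) (hs : s < n) : u (i + s) = u (j + s) := congrFun hu ⟨s, hs⟩
  funext t
  have hcnt (b : Bool) : cnt u b i t = cnt u b j t :=
    cnt_congr (fun s hs => hu' s (hs.trans t.2)) b
  have hlt (b : Bool) : cnt u b j t < n := (cnt_le u b j t).trans_lt t.2
  simp only [factor, interleave_add, hcnt, hu' t t.2]
  split_ifs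
  · exact congrArg _ (congrFun hx ⟨_, hlt true⟩)
  · exact congrArg _ (congrFun hy ⟨_, hlt false⟩)

theorem complexity_interleave_le [Finite α] [Finite β] (n : ℕ) :
    complexity (interleave u x y) n ≤ complexity u n * (complexity x n * complexity y n) := by
  let g : ℕ → (Fin n → Bool) × (Fin n → α) × (Fin n → β) := fun i =>
    (factor u n i, factor x n (cnt u true 0 i), factor y n (cnt u false 0 i))
  have hdet : Function.FactorsThrough (factor (interleave u x y) n) g := fun i j hij => by
    simp only [g, Prod.mk.injEq] at hij
    exact factor_interleave_eq u x y hij.1 hij.2.1 hij.2.2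
  have hrange : Set.range g ⊆
      Set.range (factor u n) ×ˢ Set.range (factor x n) ×ˢ Set.range (factor y n) := by
    rintro _ ⟨i, rfl⟩
    exact ⟨⟨i, rfl⟩, ⟨_, rfl⟩, ⟨_, rfl⟩⟩
  calc complexity (interleave u x y) n ≤ (Set.range g).ncard :=
        complexity_le_ncard_range hdet (Set.toFinite _)
    _ ≤ _ := Set.ncard_le_ncard hrange
    _ = _ := by simp only [Set.ncard_prod, complexity_eq_ncard_range]

variable [DecidableEq α] [DecidableEq β]

theorem cnt_interleave_inl (a : α) (i n : ℕ) :
    cnt (interleave u x y) (.inl a) i n = cnt x a (cnt u true 0 i) (cnt u true i n) :=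
  cnt_eq_cnt_of_subsequence (fun t => by unfold interleave; cases u t <;> simp) i n

theorem cnt_interleave_inr (b : β) (i n : ℕ) :
    cnt (interleave u x y) (.inr b) i n = cnt y b (cnt u false 0 i) (cnt u false i n) :=
  cnt_eq_cnt_of_subsequence (fun t => by unfold interleave; cases u t <;> simp) i n

theorem isBalanced_interleave {kx ky : ℕ} (hu : IsBalanced 1 u) (hx : IsBalanced kx x)
    (hy : IsBalanced ky y) : IsBalanced (max kx ky + 1) (interleave u x y) := by
  intro i j n c
  cases c with
  | inl a =>
    have := hu i j n true
    rw [cnt_interleave_inl, cnt_interleave_inl]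
    exact (hx.natAbs_cnt_sub_le_succ a _ _ (by omega) (by omega)).trans (by omega)
  | inr b =>
    have := hu i j n false
    rw [cnt_interleave_inr, cnt_interleave_inr]
    exact (hy.natAbs_cnt_sub_le_succ b _ _ (by omega) (by omega)).trans (by omega)

theorem hasFreq_interleave {p q : ℝ} (hu : HasFreq u true p) (hu' : HasFreq u false q)
    (hp : 0 < p) (hq : 0 < q) {gx : α → ℝ} {gy : β → ℝ} (hx : ∀ a, HasFreq x a (gx a))
    (hy : ∀ b, HasFreq y b (gy b)) :
    ∀ c, HasFreq (interleave u x y) c (Sum.elim (fun a => gx a * p) (fun b => gy b * q) c)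
  | .inl a => by
    simpa only [HasFreq, cnt_interleave_inl, cnt_zero, Sum.elim_inl] using (hx a).tendsto_cnt_div hp hu
  | .inr b => by
    simpa only [HasFreq, cnt_interleave_inr, cnt_zero, Sum.elim_inr] using (hy b).tendsto_cnt_div hq hu'

end Interleave

section Realization

variable {α β : Type*} [DecidableEq α] [DecidableEq β]

def Realizes (f : α → ℝ) (k e : ℕ) (v : ℕ → α) : Prop :=
  (∀ c, HasFreq v c (f c)) ∧ IsBalanced k v ∧ ∀ n, complexity v n ≤ (n + 1) ^ e

theorem realizes_const [Subsingleton α] (a : α) :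
    Realizes (fun _ => 1) 0 0 (fun _ : ℕ => a) := by
  have hcnt (c : α) (i n : ℕ) : cnt (fun _ : ℕ => a) c i n = n := by
    simp [cnt, Subsingleton.elim a c]
  refine ⟨fun c => ?_, fun i j n c => by simp [hcnt], fun n => ?_⟩
  · refine tendsto_const_nhds.congr' ?_
    filter_upwards [eventually_ne_atTop 0] with n hn
    simp [hcnt, hn]
  · rw [pow_zero]; exact Set.ncard_le_one_of_subsingleton _

theorem Realizes.comp_equiv {f : α → ℝ} {k e : ℕ} {v : ℕ → α} (h : Realizes f k e v)
    (σ : α ≃ β) : Realizes (f ∘ σ.symm) k e (σ ∘ v) := by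
  obtain ⟨hfreq, hbal, hcompl⟩ := h
  refine ⟨fun c => ?_, fun i j n c => ?_, fun n => ?_⟩
  · simpa only [HasFreq, cnt_comp_equiv, Function.comp_apply] using hfreq (σ.symm c)
  · simpa only [cnt_comp_equiv] using hbal i j n (σ.symm c)
  · rw [complexity_comp_equiv]; exact hcompl n

theorem Realizes.interleave_mechanical [Finite α] [Finite β] {g : α → ℝ} {h : β → ℝ}
    {kx ky ex ey : ℕ} {x : ℕ → α} {y : ℕ → β} (hx : Realizes g kx ex x) (hy : Realizes h ky ey y)
    {p : ℝ} (hp : 0 < p) (hp1 : p < 1) :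
    Realizes (Sum.elim (fun a => g a * p) (fun b => h b * (1 - p))) (max kx ky + 1)
      (ex + ey + 1) (interleave (mechanical p) x y) := by
  have hfreq := hasFreq_mechanical hp.le hp1.le
  refine ⟨hasFreq_interleave _ _ _ hfreq hfreq.false_of_true hp (by linarith) hx.1 hy.1,
    isBalanced_interleave _ _ _ (isBalanced_mechanical hp.le hp1.le) hx.2.1 hy.2.1, fun n => ?_⟩
  calc complexity (interleave (mechanical p) x y) n
      ≤ (n + 1) * ((n + 1) ^ ex * (n + 1) ^ ey) :=
        (complexity_interleave_le _ _ _ n).trans <| Nat.mul_le_mul (complexity_mechanical_le p n)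
          (Nat.mul_le_mul (hx.2.2 n) (hy.2.2 n))
    _ = (n + 1) ^ (ex + ey + 1) := by ring

theorem exists_realizes_sum [Fintype α] [Fintype β] [Nonempty α] [Nonempty β] {kx ky ex ey : ℕ}
    (hα : ∀ g : α → ℝ, (∀ a, 0 < g a) → ∑ a, g a = 1 → ∃ x, Realizes g kx ex x)
    (hβ : ∀ h : β → ℝ, (∀ b, 0 < h b) → ∑ b, h b = 1 → ∃ y, Realizes h ky ey y)
    (f : α ⊕ β → ℝ) (hpos : ∀ c, 0 < f c) (hsum : ∑ c, f c = 1) :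
    ∃ v, Realizes f (max kx ky + 1) (ex + ey + 1) v := by
  set p := ∑ a, f (.inl a)
  have hp : 0 < p := sum_pos (fun a _ => hpos _) univ_nonempty
  have hq : 0 < ∑ b, f (.inr b) := sum_pos (fun b _ => hpos _) univ_nonempty
  have hq1 : 1 - p = ∑ b, f (.inr b) := by
    rw [← hsum, Fintype.sum_sum_type, add_sub_cancel_left]
  have hq' : 0 < 1 - p := hq1 ▸ hq
  obtain ⟨x, hx⟩ := hα (fun a => f (.inl a) / p) (fun a => div_pos (hpos _) hp)
    (by rw [← sum_div, div_self hp.ne'])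
  obtain ⟨y, hy⟩ := hβ (fun b => f (.inr b) / (1 - p)) (fun b => div_pos (hpos _) hq')
    (by rw [← sum_div, hq1, div_self hq.ne'])
  refine ⟨interleave (mechanical p) x y, ?_⟩
  convert hx.interleave_mechanical hy hp (by linarith) using 1
  funext c
  cases c <;> simp only [Sum.elim_inl, Sum.elim_inr] <;> field_simp

end Realization

/-- For every `d ≥ 1` and every positive vector `f` summing to `1`, there is a
sequence over a `d`-letter alphabet with letter frequencies `f`, which is
`⌈log₂ d⌉`-balanced and whose factor complexity satisfies `𝒞(n) ≤ (n+1)^(d-1)`. -/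
theorem freq_balanced_complexity_exists (d : ℕ) (hd : 1 ≤ d) (f : Fin d → ℝ)
    (hpos : ∀ i, 0 < f i) (hsum : ∑ i, f i = 1) :
    ∃ v : ℕ → Fin d,
      (∀ i, HasFreq v i (f i)) ∧
      IsBalanced (Nat.clog 2 d) v ∧
      ∀ n : ℕ, complexity v n ≤ (n + 1) ^ (d - 1) := by
  induction d using Nat.strong_induction_on with
  | _ d ih =>
  obtain rfl | hd2 : d = 1 ∨ 2 ≤ d := by omega
  · have hf : f = fun _ => 1 :=
      funext fun i => by rwa [Subsingleton.elim i 0, ← Fin.sum_univ_one f]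
    exact ⟨_, hf ▸ realizes_const 0⟩
  · let a := (d + 1) / 2
    let b := d / 2
    have : Nonempty (Fin a) := ⟨⟨0, by omega⟩⟩
    have : Nonempty (Fin b) := ⟨⟨0, by omega⟩⟩
    let σ : Fin a ⊕ Fin b ≃ Fin d := finSumFinEquiv.trans (finCongr (by omega))
    obtain ⟨v, hv⟩ := exists_realizes_sum (ih a (by omega) (by omega)) (ih b (by omega) (by omega))
      (f ∘ σ) (fun _ => hpos _) (by rw [Fintype.sum_equiv σ (f ∘ σ) f (fun _ => rfl), hsum])
    have hclog : max (Nat.clog 2 a) (Nat.clog 2 b) + 1 = Nat.clog 2 d := by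
      rw [max_eq_left (Nat.clog_mono_right 2 (by omega)), Nat.clog_of_two_le one_lt_two hd2,
        show (d + 2 - 1) / 2 = a by omega]
    have hexp : a - 1 + (b - 1) + 1 = d - 1 := by omega
    have hf : (f ∘ σ) ∘ σ.symm = f := by ext; simp
    have := hv.comp_equiv σ
    rw [hclog, hexp, hf] at this
    exact ⟨_, this⟩
end

section
/- Let u be a sequence over {a, b} in which the letter a has frequency α ∈ (0, 1), let 𝐚 = (1213)^ω be the periodic sequence 1, 2, 1, 3, 1, 2, 1, 3, … and 𝐛 = (4)^ω the constant sequence 4, 4, 4, …, and let v = colour(u, 𝐚, 𝐛). Then the frequency vector of v is (α/2, α/4, α/4, 1−α), i.e., letter 1 has frequency α/2, letters 2 and 3 each have frequency α/4, and letter 4 has frequency 1−α in v. -/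
/-!
Among the first `n` letters of `colour u 𝐚 𝐛` the letters from `𝐚` are exactly the first
`|u[0,n)|_a` letters of `𝐚`. That index grows like `α n`, so a letter of `𝐚` with frequency `f`
in `𝐚` has frequency `α f` in the colouring, and likewise a letter of `𝐛` gets `(1 - α) f`;
positivity of `α` and `1 - α` makes the indices tend to infinity. A periodic sequence has the
letter frequencies of one period: `1/2, 1/4, 1/4` for `(1213)^ω` and `1` for `4^ω`.
-/

open Finset Filter Topology

/-- Colouring of a binary sequence `u` (letter `a` is `true`, letter `b` is `false`)
by a sequence `va` over `A` and a sequence `vb` over `B` (disjoint alphabets,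
realized as the two summands of `A ⊕ B`): the `n`-th occurrence of `a` in `u`
is replaced by `va n`, and the `n`-th occurrence of `b` by `vb n`. -/
def colour {A B : Type*} (u : ℕ → Bool) (va : ℕ → A) (vb : ℕ → B) (N : ℕ) : A ⊕ B :=
  if u N then Sum.inl (va (cnt u true 0 N)) else Sum.inr (vb (cnt u false 0 N))

section Count

variable {A : Type*} [DecidableEq A]

lemma cnt_zero_succ (u : ℕ → A) (c : A) (n : ℕ) :
    cnt u c 0 (n + 1) = cnt u c 0 n + if u n = c then 1 else 0 := by
  simp only [cnt, zero_add, ← range_eq_Ico, range_add_one, filter_insert]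
  split_ifs <;> simp [card_insert_of_notMem]

lemma cnt_zero_le (u : ℕ → A) (c : A) (n : ℕ) : cnt u c 0 n ≤ n := by
  simpa [cnt] using card_filter_le (Ico 0 n) (fun t => u t = c)

lemma cnt_add_cnt_not (u : ℕ → Bool) (b : Bool) (n : ℕ) :
    cnt u b 0 n + cnt u (!b) 0 n = n := by
  induction n with
  | zero => simp [cnt]
  | succ n ih =>
    rw [cnt_zero_succ, cnt_zero_succ]
    cases b <;> cases u n <;> simp only [Bool.not_true, Bool.not_false] at ih ⊢ <;> simp <;> omega

lemma cnt_zero_add_period {u : ℕ → A} {p : ℕ} (hu : Function.Periodic u p) (c : A)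
    (m : ℕ) : cnt u c 0 (m + p) = cnt u c 0 m + cnt u c 0 p := by
  induction m with
  | zero => simp [cnt]
  | succ m ih => rw [Nat.add_right_comm, cnt_zero_succ, ih, hu, cnt_zero_succ]; ring

lemma cnt_zero_periodic {u : ℕ → A} {p : ℕ} (hu : Function.Periodic u p) (c : A)
    (n : ℕ) : cnt u c 0 n = n / p * cnt u c 0 p + cnt u c 0 (n % p) := by
  suffices ∀ q r, cnt u c 0 (r + q * p) = q * cnt u c 0 p + cnt u c 0 r by
    simpa [Nat.mod_add_div'] using this (n / p) (n % p)
  intro q r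
  induction q with
  | zero => simp
  | succ q ih => rw [add_mul, one_mul, ← add_assoc, cnt_zero_add_period hu, ih]; ring

end Count

section Frequency

variable {A : Type*} [DecidableEq A]

lemma hasFreq_of_abs_sub_le {u : ℕ → A} {c : A} {f : ℝ} (C : ℝ)
    (h : ∀ n, |(cnt u c 0 n : ℝ) - f * n| ≤ C) : HasFreq u c f := by
  have hdev : Tendsto (fun n : ℕ => ((cnt u c 0 n : ℝ) - f * n) / n) atTop (𝓝 0) := by
    refine squeeze_zero_norm (fun n => ?_) (tendsto_const_div_atTop_nhds_zero_nat C)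
    rw [norm_div, Real.norm_natCast]
    exact div_le_div_of_nonneg_right (h n) n.cast_nonneg
  have := hdev.add_const f
  rw [zero_add] at this
  refine this.congr' ?_
  filter_upwards [eventually_ne_atTop 0] with n hn
  field_simp
  ring

theorem HasFreq.of_periodic {u : ℕ → A} {p : ℕ} (hu : Function.Periodic u p) (hp : 0 < p)
    (c : A) : HasFreq u c (cnt u c 0 p / p) := by
  refine hasFreq_of_abs_sub_le p fun n => ?_
  have hp' : (0 : ℝ) < p := by exact_mod_cast hp
  have hr : ((n % p : ℕ) : ℝ) < p := by exact_mod_cast Nat.mod_lt n hp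
  have hcr : (cnt u c 0 (n % p) : ℝ) ≤ (n % p : ℕ) := by exact_mod_cast cnt_zero_le u c _
  have hf : (cnt u c 0 p : ℝ) / p ≤ 1 := (div_le_one hp').mpr (by exact_mod_cast cnt_zero_le u c p)
  have hn : (n : ℝ) = (n / p : ℕ) * p + (n % p : ℕ) := by exact_mod_cast (Nat.div_add_mod' n p).symm
  have hdev : (cnt u c 0 n : ℝ) - cnt u c 0 p / p * n
      = cnt u c 0 (n % p) - cnt u c 0 p / p * (n % p : ℕ) := by
    rw [cnt_zero_periodic hu, hn]
    push_cast
    field_simp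
    ring
  rw [hdev, abs_le]
  constructor <;> nlinarith [(by positivity : (0 : ℝ) ≤ cnt u c 0 p / p),
    (by positivity : (0 : ℝ) ≤ cnt u c 0 (n % p)), (by positivity : (0 : ℝ) ≤ (n % p : ℕ))]

theorem HasFreq.of_forall_eq {u : ℕ → A} {c : A} (hu : ∀ n, u n = c) : HasFreq u c 1 :=
  hasFreq_of_abs_sub_le 0 fun n => by simp [cnt, hu]

theorem HasFreq.not {u : ℕ → Bool} {b : Bool} {α : ℝ} (hu : HasFreq u b α) :
    HasFreq u (!b) (1 - α) := by
  refine ((tendsto_const_nhds (x := 1)).sub hu).congr' ?_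
  filter_upwards [eventually_ne_atTop 0] with n hn
  have hsum : (cnt u (!b) 0 n : ℝ) = n - cnt u b 0 n :=
    eq_sub_of_add_eq' (by exact_mod_cast cnt_add_cnt_not u b n)
  rw [hsum, sub_div, div_self (by exact_mod_cast hn)]

theorem HasFreq.tendsto_cnt_comp_div {w : ℕ → A} {c : A} {f α : ℝ} (hw : HasFreq w c f)
    {g : ℕ → ℕ} (hg : Tendsto (fun n : ℕ => (g n : ℝ) / n) atTop (𝓝 α)) (hα : 0 < α) :
    Tendsto (fun n : ℕ => (cnt w c 0 (g n) : ℝ) / n) atTop (𝓝 (α * f)) := by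
  have hg_top : Tendsto g atTop atTop :=
    tendsto_natCast_atTop_iff.mp (tendsto_natCast_atTop_atTop.num hα hg)
  refine (hg.mul (hw.comp hg_top)).congr' ?_
  filter_upwards [hg_top.eventually_ne_atTop 0] with n hn
  simp only [Function.comp_apply]
  field_simp

end Frequency

section Colouring

variable {A B : Type*} [DecidableEq A] [DecidableEq B]

lemma cnt_colour_inl (u : ℕ → Bool) (va : ℕ → A) (vb : ℕ → B) (c : A) (n : ℕ) :
    cnt (colour u va vb) (.inl c) 0 n = cnt va c 0 (cnt u true 0 n) := by
  induction n with
  | zero => simp [cnt]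
  | succ n ih => cases h : u n <;> simp [cnt_zero_succ, colour, h, ih]

lemma cnt_colour_inr (u : ℕ → Bool) (va : ℕ → A) (vb : ℕ → B) (c : B) (n : ℕ) :
    cnt (colour u va vb) (.inr c) 0 n = cnt vb c 0 (cnt u false 0 n) := by
  induction n with
  | zero => simp [cnt]
  | succ n ih => cases h : u n <;> simp [cnt_zero_succ, colour, h, ih]

theorem HasFreq.colour_inl {u : ℕ → Bool} {α : ℝ} (hu : HasFreq u true α) (hα : 0 < α)
    {va : ℕ → A} {c : A} {f : ℝ} (hva : HasFreq va c f) (vb : ℕ → B) :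
    HasFreq (colour u va vb) (.inl c) (α * f) := by
  simpa only [HasFreq, cnt_colour_inl] using hva.tendsto_cnt_comp_div hu hα

theorem HasFreq.colour_inr {u : ℕ → Bool} {β : ℝ} (hu : HasFreq u false β) (hβ : 0 < β)
    (va : ℕ → A) {vb : ℕ → B} {c : B} {f : ℝ} (hvb : HasFreq vb c f) :
    HasFreq (colour u va vb) (.inr c) (β * f) := by
  simpa only [HasFreq, cnt_colour_inr] using hvb.tendsto_cnt_comp_div hu hβ

end Colouring

theorem colour_freq_vector_quaternary_general (u : ℕ → Bool) (α : ℝ)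
    (hα : α ∈ Set.Ioo (0 : ℝ) 1) (hu : HasFreq u true α)
    (va : ℕ → Fin 3)
    (hva : ∀ n, va n = if n % 2 = 0 then 0 else if n % 4 = 1 then 1 else 2)
    (vb : ℕ → Fin 1) :
    HasFreq (colour u va vb) (Sum.inl 0) (α / 2) ∧
    HasFreq (colour u va vb) (Sum.inl 1) (α / 4) ∧
    HasFreq (colour u va vb) (Sum.inl 2) (α / 4) ∧
    HasFreq (colour u va vb) (Sum.inr 0) (1 - α) := by
  have hva_periodic : Function.Periodic va 4 := fun n => by simp only [hva]; grind
  have hva_freq (c : Fin 3) : HasFreq va c (cnt va c 0 4 / 4) := by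
    exact_mod_cast HasFreq.of_periodic hva_periodic (by norm_num) c
  have hvb_freq : HasFreq vb 0 1 :=
    HasFreq.of_forall_eq fun _ => Subsingleton.elim _ _
  have h1α : 0 < 1 - α := sub_pos.mpr hα.2
  have hcnt : cnt va 0 0 4 = 2 ∧ cnt va 1 0 4 = 1 ∧ cnt va 2 0 4 = 1 := by
    simp only [cnt, hva]; decide
  refine ⟨?_, ?_, ?_, ?_⟩
  · convert hu.colour_inl hα.1 (hva_freq 0) vb using 1; norm_num [hcnt]; ring
  · convert hu.colour_inl hα.1 (hva_freq 1) vb using 1; norm_num [hcnt]; ring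
  · convert hu.colour_inl hα.1 (hva_freq 2) vb using 1; norm_num [hcnt]; ring
  · simpa using hu.not.colour_inr h1α va hvb_freq

/-- Colouring a binary sequence with `a`-frequency `α ∈ (0,1)` by the constant gap
sequences `(1213)^ω` (letters `1,2,3` encoded as `0,1,2 : Fin 3`) and `(4)^ω`
(letter `4` encoded as `0 : Fin 1`) yields the frequency vector
`(α/2, α/4, α/4, 1-α)`. -/
theorem colour_freq_vector_quaternary (u : ℕ → Bool) (α : ℝ)
    (hα : α ∈ Set.Ioo (0 : ℝ) 1) (hu : HasFreq u true α)
    (va : ℕ → Fin 3)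
    (hva : ∀ n, va n = if n % 2 = 0 then 0 else if n % 4 = 1 then 1 else 2)
    (vb : ℕ → Fin 1) (hvb : ∀ n, vb n = 0) :
    HasFreq (colour u va vb) (Sum.inl 0) (α / 2) ∧
    HasFreq (colour u va vb) (Sum.inl 1) (α / 4) ∧
    HasFreq (colour u va vb) (Sum.inl 2) (α / 4) ∧
    HasFreq (colour u va vb) (Sum.inr 0) (1 - α) :=
  colour_freq_vector_quaternary_general u α hα hu va hva vb
end
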